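/- arXiv:2211.02395 — 2 statements merged into one kernel-verified Lean document; each statement's English description precedes it below -/
import Mathlib

section
/- Let n be an even positive integer and let G_n = P_n + K₁ be the graph obtained from the path on n vertices by adding a universal vertex. Then DOM(G_n) = n/2 + 1. -/
open SimpleGraph

variable {V : Type*}

/-- `D` is an orientation of the simple graph `G`: arcs only along edges, and each edge
gets exactly one of its two possible directions. -/
def IsOrientation (G : SimpleGraph V) (D : V → V → Prop) : Prop :=
  (∀ u v, D u v → G.Adj u v) ∧ (∀ u v, G.Adj u v → (D u v ↔ ¬ D v u))

/-- `S` is a dominating set of the digraph `D`. -/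
def IsDomSet (D : V → V → Prop) (S : Finset V) : Prop :=
  ∀ v, v ∉ S → ∃ u ∈ S, D u v

/-- Domination number of a digraph. -/
noncomputable def domNum (D : V → V → Prop) : ℕ :=
  sInf {n | ∃ S : Finset V, S.card = n ∧ IsDomSet D S}

/-- Orientable domination number of a graph. -/
noncomputable def DOM (G : SimpleGraph V) : ℕ :=
  sSup {n | ∃ D : V → V → Prop, IsOrientation G D ∧ domNum D = n}

/-- Independence number. -/
noncomputable def indepNum (G : SimpleGraph V) : ℕ :=
  sSup {n | ∃ S : Finset V, S.card = n ∧ ∀ u ∈ S, ∀ v ∈ S, ¬ G.Adj u v}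

/-- Matching number. -/
noncomputable def matchNum (G : SimpleGraph V) : ℕ :=
  sSup {n | ∃ M : Finset (Sym2 V), M.card = n ∧ (∀ e ∈ M, e ∈ G.edgeSet) ∧
    ∀ e ∈ M, ∀ f ∈ M, e ≠ f → ∀ v, v ∈ e → v ∉ f}

/-- Maximum order of a bipartite induced subgraph. -/
noncomputable def bipNum (G : SimpleGraph V) : ℕ :=
  sSup {n | ∃ s : Finset V, s.card = n ∧ (G.induce (s : Set V)).Colorable 2}

/-- Join of `G` with a single universal vertex (`none`). -/
def joinK1 (G : SimpleGraph V) : SimpleGraph (Option V) :=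
  SimpleGraph.fromRel (fun a b => a = none ∨ ∃ u v, a = some u ∧ b = some v ∧ G.Adj u v)

/-- Lexicographic product `G ∘ H`. -/
def lexProd {W : Type*} (G : SimpleGraph V) (H : SimpleGraph W) : SimpleGraph (V × W) :=
  SimpleGraph.fromRel (fun a b => G.Adj a.1 b.1 ∨ (a.1 = b.1 ∧ H.Adj a.2 b.2))

/-- Corona `G ⊙ H`: vertex `(u, none)` is the vertex `u` of `G`, the vertices `(u, some w)`
form the copy of `H` joined to `u`. -/
def corona {W : Type*} (G : SimpleGraph V) (H : SimpleGraph W) : SimpleGraph (V × Option W) :=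
  SimpleGraph.fromRel (fun a b =>
    (a.2 = none ∧ b.2 = none ∧ G.Adj a.1 b.1) ∨
    (a.1 = b.1 ∧ ∃ w w', a.2 = some w ∧ b.2 = some w' ∧ H.Adj w w') ∨
    (a.1 = b.1 ∧ a.2 = none ∧ b.2 ≠ none))

/-- A digraph is acyclic if it has no directed cycle. -/
def DigraphAcyclic (D : V → V → Prop) : Prop :=
  ¬ ∃ (m : ℕ) (c : ℕ → V), 0 < m ∧ (∀ i < m, D (c i) (c (i + 1))) ∧ c m = c 0

/-- A packing of a digraph: no arc joins two of its vertices and no vertex has two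
out-neighbors in it. -/
def IsPacking (D : V → V → Prop) (P : Finset V) : Prop :=
  (∀ u ∈ P, ∀ v ∈ P, ¬ D u v) ∧
  (∀ u ∈ P, ∀ v ∈ P, u ≠ v → ∀ w, ¬ (D w u ∧ D w v))

/-- Packing number of a digraph. -/
noncomputable def packNum (D : V → V → Prop) : ℕ :=
  sSup {n | ∃ P : Finset V, P.card = n ∧ IsPacking D P}

/-!
Upper bound: in any orientation, the universal vertex together with the tail of each edge
`{2k, 2k+1}` of a perfect matching of the path dominates.

Lower bound: orient the path as `0 → 1 → ⋯ → n-1`, the universal vertex `none` towards the even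
vertices and the odd vertices towards `none`. Since `2k` is the only in-neighbour of `2k+1`, a
dominating set meets each of the `n/2` pairs `{2k, 2k+1}`. If it avoids `none`, it contains an odd
vertex (to dominate `none`); for the least one, `2j+1`, the vertex `2j` can only be dominated by
itself, so the pair `{2j, 2j+1}` is met twice.
-/

lemma joinK1_adj_some_some {G : SimpleGraph V} {u v : V} :
    (joinK1 G).Adj (some u) (some v) ↔ G.Adj u v := by
  simp only [joinK1, fromRel_adj, ne_eq, Option.some.injEq, reduceCtorEq, false_or]
  constructor
  · rintro ⟨-, ⟨u', v', rfl, rfl, h⟩ | ⟨u', v', rfl, rfl, h⟩⟩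
    · exact h
    · exact h.symm
  · exact fun h => ⟨h.ne, Or.inl ⟨u, v, rfl, rfl, h⟩⟩

lemma joinK1_adj_none_some {G : SimpleGraph V} {v : V} : (joinK1 G).Adj none (some v) := by
  simp [joinK1]

lemma domNum_le_card {D : V → V → Prop} {S : Finset V} (h : IsDomSet D S) :
    domNum D ≤ S.card :=
  Nat.sInf_le ⟨S, rfl, h⟩

lemma le_domNum [Fintype V] {D : V → V → Prop} {k : ℕ}
    (h : ∀ S, IsDomSet D S → k ≤ S.card) : k ≤ domNum D :=
  le_csInf ⟨_, Finset.univ, rfl, fun v hv => absurd (Finset.mem_univ v) hv⟩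
    (by rintro _ ⟨S, rfl, hS⟩; exact h S hS)

lemma DOM_eq_of_le_of_domNum_eq {G : SimpleGraph V} {k : ℕ}
    (hle : ∀ D, IsOrientation G D → domNum D ≤ k)
    {D₀ : V → V → Prop} (hD₀ : IsOrientation G D₀) (hk : domNum D₀ = k) : DOM G = k := by
  have hbdd : k ∈ upperBounds {n | ∃ D, IsOrientation G D ∧ domNum D = n} := by
    rintro _ ⟨D, hD, rfl⟩
    exact hle D hD
  exact le_antisymm (csSup_le ⟨k, D₀, hD₀, hk⟩ hbdd) (le_csSup ⟨k, hbdd⟩ ⟨D₀, hD₀, hk⟩)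

lemma IsOrientation.domNum_le_card_add_card {G : SimpleGraph V} {D : V → V → Prop}
    (hD : IsOrientation G D) {ι : Type*} (R : Finset V) (s : Finset ι) (a b : ι → V)
    (hab : ∀ k ∈ s, G.Adj (a k) (b k)) (hcover : ∀ v ∉ R, ∃ k ∈ s, v = a k ∨ v = b k) :
    domNum D ≤ R.card + s.card := by
  classical
  let tail : ι → V := fun k => if D (a k) (b k) then a k else b k
  have hdom : IsDomSet D (R ∪ s.image tail) := by
    intro v hv
    obtain ⟨k, hk, hvk⟩ := hcover v fun hR => hv (Finset.mem_union_left _ hR)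
    have htail : tail k ∈ R ∪ s.image tail :=
      Finset.mem_union_right _ (Finset.mem_image_of_mem tail hk)
    refine ⟨tail k, htail, ?_⟩
    by_cases hfwd : D (a k) (b k)
    · have hv_ne : v ≠ a k := fun h => hv (by simpa [tail, hfwd, h] using htail)
      simp only [tail, if_pos hfwd]
      rwa [hvk.resolve_left hv_ne]
    · have hbwd : D (b k) (a k) := by_contra fun h => hfwd ((hD.2 _ _ (hab k hk)).2 h)
      have hv_ne : v ≠ b k := fun h => hv (by simpa [tail, hfwd, h] using htail)
      simp only [tail, if_neg hfwd]
      rwa [hvk.resolve_right hv_ne]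
  calc domNum D ≤ (R ∪ s.image tail).card := domNum_le_card hdom
    _ ≤ R.card + (s.image tail).card := Finset.card_union_le _ _
    _ ≤ R.card + s.card := Nat.add_le_add_left Finset.card_image_le _

lemma domNum_le_of_isOrientation_joinK1_pathGraph (m : ℕ)
    {D : Option (Fin (m + m)) → Option (Fin (m + m)) → Prop}
    (hD : IsOrientation (joinK1 (pathGraph (m + m))) D) : domNum D ≤ m + 1 := by
  have h := hD.domNum_le_card_add_card {none} (Finset.univ : Finset (Fin m))
    (fun k => some ⟨2 * k, by omega⟩) (fun k => some ⟨2 * k + 1, by omega⟩)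
    (fun k _ => joinK1_adj_some_some.2 (pathGraph_adj.2 (Or.inl rfl)))
    (by
      rintro (_ | i) hi
      · exact absurd (Finset.mem_singleton_self _) hi
      · refine ⟨⟨i.val / 2, by omega⟩, Finset.mem_univ _, ?_⟩
        simp only [Option.some.injEq, Fin.ext_iff]
        omega)
  simpa [add_comm] using h

def altOrientation (n : ℕ) : Option (Fin n) → Option (Fin n) → Prop
  | some i, some j => i.val + 1 = j.val
  | none, some i => i.val % 2 = 0
  | some i, none => i.val % 2 = 1
  | none, none => False

lemma isOrientation_altOrientation (n : ℕ) :
    IsOrientation (joinK1 (pathGraph n)) (altOrientation n) := by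
  constructor
  · rintro (_ | i) (_ | j) h
    · exact h.elim
    · exact joinK1_adj_none_some
    · exact joinK1_adj_none_some.symm
    · exact joinK1_adj_some_some.2 (pathGraph_adj.2 (Or.inl h))
  · rintro (_ | i) (_ | j) hadj
    · exact absurd hadj (joinK1 (pathGraph n)).irrefl
    · show j.val % 2 = 0 ↔ ¬ j.val % 2 = 1
      omega
    · show i.val % 2 = 1 ↔ ¬ i.val % 2 = 0
      omega
    · have h := pathGraph_adj.1 (joinK1_adj_some_some.1 hadj)
      show i.val + 1 = j.val ↔ ¬ j.val + 1 = i.val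
      omega

section altOrientation

variable {n : ℕ} {S : Finset (Option (Fin n))}

/-- The index `k` of the pair `{2k, 2k+1}`; `none` gets the fresh index `n / 2` (for even `n`). -/
def pairIndex (n : ℕ) (v : Option (Fin n)) : ℕ :=
  v.elim (n / 2) fun i => i.val / 2

lemma pairIndex_mem_image_of_isDomSet (hS : IsDomSet (altOrientation n) S) {k : ℕ}
    (hk : k < n / 2) : k ∈ S.image (pairIndex n) := by
  by_cases hodd : some (⟨2 * k + 1, by omega⟩ : Fin n) ∈ S
  · exact Finset.mem_image.2 ⟨_, hodd, by simp only [pairIndex, Option.elim_some]; omega⟩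
  obtain ⟨_ | i, hiS, hi⟩ := hS _ hodd
  · exact absurd hi (show (2 * k + 1) % 2 ≠ 0 by omega)
  · have hi : i.val + 1 = 2 * k + 1 := hi
    exact Finset.mem_image.2 ⟨_, hiS, by simp only [pairIndex, Option.elim_some]; omega⟩

lemma not_injOn_pairIndex_of_isDomSet (hS : IsDomSet (altOrientation n) S) (hnone : none ∉ S) :
    ¬ Set.InjOn (pairIndex n) S := by
  classical
  have hodd : ∃ j : ℕ, ∃ hj : j < n, j % 2 = 1 ∧ some ⟨j, hj⟩ ∈ S := by
    obtain ⟨_ | i, hiS, hi⟩ := hS none hnone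
    · exact absurd hiS hnone
    · exact ⟨i.val, i.isLt, hi, hiS⟩
  obtain ⟨hj, hj_odd, hjS⟩ := Nat.find_spec hodd
  set j := Nat.find hodd
  -- the in-neighbours of `j - 1` are `none` and the odd vertex `j - 2`, neither of which is in `S`
  have hprevS : some (⟨j - 1, by omega⟩ : Fin n) ∈ S := by
    by_contra hprev
    obtain ⟨_ | i, hiS, hi⟩ := hS _ hprev
    · exact hnone hiS
    · have hi : i.val + 1 = j - 1 := hi
      exact Nat.find_min hodd (show i.val < j by omega) ⟨i.isLt, by omega, hiS⟩
  intro hinj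
  have := hinj hprevS hjS (by simp only [pairIndex, Option.elim_some]; omega)
  simp only [Option.some.injEq, Fin.ext_iff] at this
  omega

lemma card_le_of_isDomSet_altOrientation (hS : IsDomSet (altOrientation n) S) :
    n / 2 + 1 ≤ S.card := by
  classical
  have hpairs : Finset.range (n / 2) ⊆ S.image (pairIndex n) := fun k hk =>
    pairIndex_mem_image_of_isDomSet hS (Finset.mem_range.1 hk)
  by_cases hnone : none ∈ S
  · have hall : Finset.range (n / 2 + 1) ⊆ S.image (pairIndex n) := by
      rw [Finset.range_add_one]
      exact Finset.insert_subset (Finset.mem_image_of_mem _ hnone) hpairs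
    simpa using (Finset.card_le_card hall).trans Finset.card_image_le
  · have hlt : (S.image (pairIndex n)).card < S.card :=
      lt_of_le_of_ne Finset.card_image_le
        (mt Finset.card_image_iff.1 (not_injOn_pairIndex_of_isDomSet hS hnone))
    simpa using (Finset.card_le_card hpairs).trans_lt hlt

end altOrientation

lemma domNum_altOrientation (m : ℕ) : domNum (altOrientation (m + m)) = m + 1 := by
  refine le_antisymm
    (domNum_le_of_isOrientation_joinK1_pathGraph m (isOrientation_altOrientation _))
    (le_domNum fun S hS => ?_)
  simpa [show (m + m) / 2 = m by omega] using card_le_of_isDomSet_altOrientation hS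

theorem stmt7_general (n : ℕ) (heven : Even n) :
    DOM (joinK1 (pathGraph n)) = n / 2 + 1 := by
  obtain ⟨m, rfl⟩ := heven
  rw [show (m + m) / 2 = m by omega]
  exact DOM_eq_of_le_of_domNum_eq (fun _ => domNum_le_of_isOrientation_joinK1_pathGraph m)
    (isOrientation_altOrientation _) (domNum_altOrientation m)

theorem stmt7 (n : ℕ) (hn : 0 < n) (heven : Even n) :
    DOM (joinK1 (pathGraph n)) = n / 2 + 1 :=
  stmt7_general n heven
end

section
/- If at least one of G and H is bipartite, then DOM(G □ H) ≥ DOM(G)·DOM(H). -/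
open SimpleGraph

variable {V : Type*}

/-!
A bipartite digraph has a kernel: take the vertices of one colour in a source strong
component, delete that component together with their out-neighbours, and recurse. Applied to
an orientation realising `DOM G`, this gives an independent set of size at least `DOM G`
when `G` is bipartite.

Given an independent set `I` of `G` and an orientation of `H` realising `DOM H`, orient
`G □ H` fibrewise, with no `G`-arc entering a fibre over `I`. Each such fibre must then be
dominated from within, so every dominating set meets it in at least `DOM H` vertices, and
`DOM (G □ H) ≥ |I| · DOM H`. If instead `H` is bipartite, use `G □ H ≃ H □ G`.
-/

open Finset Relation

section Orientation

variable {W : Type*} {G : SimpleGraph V} {D : V → V → Prop}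

lemma IsOrientation.adj_iff (hD : IsOrientation G D) {u v : V} :
    G.Adj u v ↔ D u v ∨ D v u := by
  refine ⟨fun h => ?_, ?_⟩
  · by_contra! hn
    exact hn.1 ((hD.2 u v h).2 hn.2)
  · rintro (h | h)
    exacts [hD.1 _ _ h, (hD.1 _ _ h).symm]

lemma exists_isOrientation (G : SimpleGraph V) : ∃ D, IsOrientation G D := by
  classical
  let : LinearOrder V := IsWellOrder.linearOrder WellOrderingRel
  refine ⟨fun u v => G.Adj u v ∧ u < v, fun _ _ h => h.1, fun u v h => ?_⟩
  simp only [h, h.symm, true_and, not_lt]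
  exact (G.ne_of_adj h).le_iff_lt.symm

lemma exists_isOrientation_not_mem (G : SimpleGraph V) {I : Set V} (hI : G.IsIndepSet I) :
    ∃ D, IsOrientation G D ∧ ∀ u v, D u v → v ∉ I := by
  obtain ⟨D₀, hD₀⟩ := exists_isOrientation G
  refine ⟨fun u v => G.Adj u v ∧ v ∉ I ∧ (u ∈ I ∨ D₀ u v), ⟨fun _ _ h => h.1,
    fun u v h => ?_⟩, fun _ _ h => h.2.1⟩
  have hD₀uv := hD₀.2 u v h
  by_cases hu : u ∈ I <;> by_cases hv : v ∈ I
  · exact absurd h (hI hu hv (G.ne_of_adj h))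
  all_goals simp only [h, h.symm, hu, hv, hD₀uv]; tauto

def boxProdRel (DG : V → V → Prop) (DH : W → W → Prop) (a b : V × W) : Prop :=
  DG a.1 b.1 ∧ a.2 = b.2 ∨ DH a.2 b.2 ∧ a.1 = b.1

lemma IsOrientation.boxProd {H : SimpleGraph W} {DG : V → V → Prop} {DH : W → W → Prop}
    (hDG : IsOrientation G DG) (hDH : IsOrientation H DH) :
    IsOrientation (G □ H) (boxProdRel DG DH) := by
  refine ⟨fun a b h => ?_, fun a b h => ?_⟩
  · rcases h with ⟨h, h'⟩ | ⟨h, h'⟩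
    exacts [SimpleGraph.boxProd_adj.2 (.inl ⟨hDG.1 _ _ h, h'⟩),
      SimpleGraph.boxProd_adj.2 (.inr ⟨hDH.1 _ _ h, h'⟩)]
  · rcases SimpleGraph.boxProd_adj.1 h with ⟨h, h'⟩ | ⟨h, h'⟩
    · simp only [boxProdRel, h', G.ne_of_adj h, (G.ne_of_adj h).symm, and_true, and_false,
        or_false]
      exact hDG.2 _ _ h
    · simp only [boxProdRel, h', H.ne_of_adj h, (H.ne_of_adj h).symm, and_true, and_false,
        false_or]
      exact hDH.2 _ _ h

end Orientation

lemma domNum_le {D : V → V → Prop} {S : Finset V} (hS : IsDomSet D S) : domNum D ≤ #S :=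
  Nat.sInf_le ⟨S, rfl, hS⟩

section Domination

variable {W : Type*} [Fintype V] {G : SimpleGraph V} {D : V → V → Prop}

lemma exists_isDomSet_card_eq_domNum (D : V → V → Prop) :
    ∃ S : Finset V, IsDomSet D S ∧ #S = domNum D := by
  obtain ⟨S, hS, hSD⟩ := Nat.sInf_mem (s := {n | ∃ S : Finset V, #S = n ∧ IsDomSet D S})
    ⟨_, univ, rfl, fun v hv => absurd (mem_univ v) hv⟩
  exact ⟨S, hSD, hS⟩

lemma bddAbove_domNum_orientations (G : SimpleGraph V) :
    BddAbove {n | ∃ D : V → V → Prop, IsOrientation G D ∧ domNum D = n} := by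
  refine ⟨Fintype.card V, ?_⟩
  rintro _ ⟨D, -, rfl⟩
  exact (domNum_le fun v hv => absurd (mem_univ v) hv).trans_eq (card_univ (α := V))

lemma IsOrientation.domNum_le_DOM (hD : IsOrientation G D) : domNum D ≤ DOM G :=
  le_csSup (bddAbove_domNum_orientations G) ⟨D, hD, rfl⟩

lemma exists_isOrientation_domNum_eq_DOM (G : SimpleGraph V) :
    ∃ D, IsOrientation G D ∧ domNum D = DOM G := by
  obtain ⟨D, hD⟩ := exists_isOrientation G
  exact Nat.sSup_mem (s := {n | ∃ D, IsOrientation G D ∧ domNum D = n}) ⟨_, D, hD, rfl⟩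
    (bddAbove_domNum_orientations G)

lemma DOM_le_of_iso [Fintype W] {H : SimpleGraph W} (e : G ≃g H) : DOM G ≤ DOM H := by
  classical
  obtain ⟨D, hD, hDG⟩ := exists_isOrientation_domNum_eq_DOM G
  let D' : W → W → Prop := fun x y => D (e.symm x) (e.symm y)
  have hD' : IsOrientation H D' :=
    ⟨fun _ _ h => e.symm.map_adj_iff.1 (hD.1 _ _ h),
      fun _ _ h => hD.2 _ _ (e.symm.map_adj_iff.2 h)⟩
  obtain ⟨S', hS', hS'D'⟩ := exists_isDomSet_card_eq_domNum D'
  have hS : IsDomSet D (S'.image e.symm) := by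
    intro v hv
    obtain ⟨u', hu', hu'v⟩ :=
      hS' (e v) fun h => hv (mem_image.2 ⟨e v, h, e.symm_apply_apply v⟩)
    exact ⟨e.symm u', mem_image_of_mem _ hu', by simpa [D'] using hu'v⟩
  calc DOM G = domNum D := hDG.symm
    _ ≤ #(S'.image e.symm) := domNum_le hS
    _ ≤ domNum D' := card_image_le.trans_eq hS'D'
    _ ≤ DOM H := hD'.domNum_le_DOM

end Domination

section Kernel

open scoped Classical

variable {D : V → V → Prop}

/-- A kernel of `D` on `A`, in the orientation convention of `IsDomSet`: every vertex of `A`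
outside `S` has an in-neighbour in `S`. -/
def IsKernelOn (D : V → V → Prop) (A S : Finset V) : Prop :=
  S ⊆ A ∧ (∀ u ∈ S, ∀ v ∈ S, ¬ D u v) ∧ ∀ w ∈ A, w ∉ S → ∃ u ∈ S, D u w

lemma IsKernelOn.union {A C K S : Finset V} (hCA : C ⊆ A)
    (hC : ∀ x ∈ A, ∀ y ∈ C, D x y → x ∈ C) (hK : IsKernelOn D C K)
    (hS : IsKernelOn D {w ∈ A \ C | ∀ u ∈ K, ¬ D u w} S) : IsKernelOn D A (S ∪ K) := by
  obtain ⟨hKC, hKind, hKabs⟩ := hK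
  obtain ⟨hSA, hSind, hSabs⟩ := hS
  have hS' : ∀ x ∈ S, x ∈ A ∧ x ∉ C ∧ ∀ u ∈ K, ¬ D u x := fun x hx => by
    simpa only [mem_filter, mem_sdiff, and_assoc] using hSA hx
  refine ⟨union_subset (fun x hx => (hS' x hx).1) (hKC.trans hCA), ?_, ?_⟩
  · simp only [mem_union]
    rintro u (hu | hu) w (hw | hw) huw
    · exact hSind u hu w hw huw
    · exact (hS' u hu).2.1 (hC u (hS' u hu).1 w (hKC hw) huw)
    · exact (hS' w hw).2.2 u hu huw
    · exact hKind u hu w hw huw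
  · intro w hwA hw
    rw [mem_union, not_or] at hw
    by_cases hwC : w ∈ C
    · obtain ⟨u, hu, huw⟩ := hKabs w hwC hw.2
      exact ⟨u, mem_union_right _ hu, huw⟩
    by_cases hKw : ∃ u ∈ K, D u w
    · obtain ⟨u, hu, huw⟩ := hKw
      exact ⟨u, mem_union_right _ hu, huw⟩
    push Not at hKw
    obtain ⟨u, hu, huw⟩ := hSabs w (mem_filter.2 ⟨mem_sdiff.2 ⟨hwA, hwC⟩, hKw⟩) hw.1
    exact ⟨u, mem_union_left _ hu, huw⟩

lemma exists_mem_forall_reflTransGen_imp (r : V → V → Prop) {A : Finset V} (hA : A.Nonempty) :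
    ∃ v ∈ A, ∀ u ∈ A, ReflTransGen r u v → ReflTransGen r v u := by
  obtain ⟨v, hvA, hvmin⟩ := A.exists_min_image (fun v => #{u ∈ A | ReflTransGen r u v}) hA
  refine ⟨v, hvA, fun u huA huv => ?_⟩
  by_contra hvu
  have hlt : #{w ∈ A | ReflTransGen r w u} < #{w ∈ A | ReflTransGen r w v} := by
    refine card_lt_card ⟨fun w hw => ?_, fun h => ?_⟩
    · rw [mem_filter] at hw ⊢
      exact ⟨hw.1, hw.2.trans huv⟩
    · exact hvu (mem_filter.1 (h (mem_filter.2 ⟨hvA, .refl⟩))).2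
  exact (hvmin u huA).not_gt hlt

lemma isKernelOn_sameColor_ancestors {c : V → Fin 2} (hc : ∀ u v, D u v → c u ≠ c v)
    {A : Finset V} {v : V}
    (hv : ∀ u ∈ A, ReflTransGen (fun a b => a ∈ A ∧ D a b) u v →
      ReflTransGen (fun a b => a ∈ A ∧ D a b) v u) :
    IsKernelOn D {u ∈ A | ReflTransGen (fun a b => a ∈ A ∧ D a b) u v}
      {u ∈ A | ReflTransGen (fun a b => a ∈ A ∧ D a b) u v ∧ c u = c v} := by
  refine ⟨fun u hu => ?_, fun u hu w hw huw => ?_, fun w hw hwK => ?_⟩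
  · simp only [mem_filter] at hu ⊢
    exact ⟨hu.1, hu.2.1⟩
  · simp only [mem_filter] at hu hw
    exact hc u w huw (hu.2.2.trans hw.2.2.symm)
  · simp only [mem_filter, not_and] at hw hwK ⊢
    have hcw : c w ≠ c v := hwK hw.1 hw.2
    -- `v` reaches `w`, and the last arc of such a path starts at an ancestor of `v`
    rcases (hv w hw.1 hw.2).cases_tail with rfl | ⟨x, -, hxA, hxw⟩
    · exact absurd rfl hcw
    have hcx : c x ≠ c w := hc x w hxw
    exact ⟨x, ⟨hxA, .head ⟨hxA, hxw⟩ hw.2, by omega⟩, hxw⟩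

theorem exists_isKernelOn_of_bicolored {c : V → Fin 2} (hc : ∀ u v, D u v → c u ≠ c v)
    (A : Finset V) : ∃ S, IsKernelOn D A S := by
  induction A using Finset.strongInduction with
  | H A ih =>
  rcases A.eq_empty_or_nonempty with rfl | hA
  · exact ⟨∅, by simp [IsKernelOn]⟩
  set r : V → V → Prop := fun a b => a ∈ A ∧ D a b
  obtain ⟨v, hvA, hv⟩ := exists_mem_forall_reflTransGen_imp r hA
  set C := {u ∈ A | ReflTransGen r u v}
  have hvC : v ∈ C := mem_filter.2 ⟨hvA, .refl⟩
  have hC : ∀ x ∈ A, ∀ y ∈ C, D x y → x ∈ C := fun x hx y hy hxy =>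
    mem_filter.2 ⟨hx, .head ⟨hx, hxy⟩ (mem_filter.1 hy).2⟩
  set K := {u ∈ A | ReflTransGen r u v ∧ c u = c v}
  have hsub : {w ∈ A \ C | ∀ u ∈ K, ¬ D u w} ⊂ A :=
    Finset.ssubset_of_subset_of_ssubset (filter_subset _ _)
      (sdiff_ssubset (filter_subset _ _) ⟨v, hvC⟩)
  obtain ⟨S, hS⟩ := ih _ hsub
  exact ⟨S ∪ K, (isKernelOn_sameColor_ancestors hc hv).union (filter_subset _ _) hC hS⟩

end Kernel

theorem exists_isIndepSet_DOM_le_card [Fintype V] {G : SimpleGraph V} (hG : G.Colorable 2) :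
    ∃ S : Finset V, G.IsIndepSet S ∧ DOM G ≤ #S := by
  obtain ⟨D, hD, hDG⟩ := exists_isOrientation_domNum_eq_DOM G
  obtain ⟨c⟩ := hG
  obtain ⟨S, -, hSind, hSabs⟩ :=
    exists_isKernelOn_of_bicolored (c := c) (fun u v h => c.valid (hD.1 u v h)) univ
  refine ⟨S, fun u hu v hv _ huv => ?_, hDG ▸ domNum_le fun w hw => hSabs w (mem_univ w) hw⟩
  rcases hD.adj_iff.1 huv with h | h
  exacts [hSind u hu v hv h, hSind v hv u hu h]

section BoxProduct

variable {W : Type*}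

lemma IsDomSet.image_snd_fibre [DecidableEq V] [DecidableEq W] {DG : V → V → Prop}
    {DH : W → W → Prop} {S : Finset (V × W)} (hS : IsDomSet (boxProdRel DG DH) S) {g : V}
    (hg : ∀ u, ¬ DG u g) :
    IsDomSet DH ({p ∈ S | p.1 = g}.image Prod.snd) := by
  intro h hh
  obtain ⟨u, huS, hu⟩ :=
    hS (g, h) fun hgh => hh (mem_image.2 ⟨(g, h), mem_filter.2 ⟨hgh, rfl⟩, rfl⟩)
  rcases hu with ⟨hu, -⟩ | ⟨hu, hug⟩
  · exact absurd hu (hg _)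
  · exact ⟨u.2, mem_image.2 ⟨u, mem_filter.2 ⟨huS, hug⟩, rfl⟩, hu⟩

lemma card_mul_domNum_le_domNum_boxProdRel [Fintype V] [Fintype W] {DG : V → V → Prop}
    (DH : W → W → Prop) {I : Finset V} (hI : ∀ g ∈ I, ∀ u, ¬ DG u g) :
    #I * domNum DH ≤ domNum (boxProdRel DG DH) := by
  classical
  obtain ⟨S, hS, hSE⟩ := exists_isDomSet_card_eq_domNum (boxProdRel DG DH)
  calc #I * domNum DH = ∑ _g ∈ I, domNum DH := by rw [sum_const, smul_eq_mul]
    _ ≤ ∑ g ∈ I, #{p ∈ S | p.1 = g} := sum_le_sum fun g hg =>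
      (domNum_le (hS.image_snd_fibre (hI g hg))).trans card_image_le
    _ = #{p ∈ S | p.1 ∈ I} := sum_card_fiberwise_eq_card_filter S I Prod.fst
    _ ≤ domNum (boxProdRel DG DH) := (card_filter_le _ _).trans_eq hSE

theorem card_mul_DOM_le_DOM_boxProd [Fintype V] [Fintype W] {G : SimpleGraph V}
    (H : SimpleGraph W) {I : Finset V} (hI : G.IsIndepSet I) : #I * DOM H ≤ DOM (G □ H) := by
  obtain ⟨DH, hDH, hDHH⟩ := exists_isOrientation_domNum_eq_DOM H
  obtain ⟨DG, hDG, hDGI⟩ := exists_isOrientation_not_mem G hI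
  calc #I * DOM H = #I * domNum DH := by rw [hDHH]
    _ ≤ domNum (boxProdRel DG DH) :=
      card_mul_domNum_le_domNum_boxProdRel DH fun g hg u h => hDGI u g h hg
    _ ≤ DOM (G □ H) := (hDG.boxProd hDH).domNum_le_DOM

end BoxProduct

theorem stmt12 {V W : Type*} [Fintype V] [Fintype W]
    (G : SimpleGraph V) (H : SimpleGraph W)
    (hbip : G.Colorable 2 ∨ H.Colorable 2) :
    DOM G * DOM H ≤ DOM (G □ H) := by
  rcases hbip with hG | hH
  · obtain ⟨I, hI, hGI⟩ := exists_isIndepSet_DOM_le_card hG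
    exact (Nat.mul_le_mul_right _ hGI).trans (card_mul_DOM_le_DOM_boxProd H hI)
  · obtain ⟨I, hI, hHI⟩ := exists_isIndepSet_DOM_le_card hH
    calc DOM G * DOM H ≤ #I * DOM G := by rw [mul_comm]; exact Nat.mul_le_mul_right _ hHI
      _ ≤ DOM (H □ G) := card_mul_DOM_le_DOM_boxProd G hI
      _ ≤ DOM (G □ H) := DOM_le_of_iso (boxProdComm H G)
end
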